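/- arXiv:1405.3546 — 6 statements merged into one kernel-verified Lean document; each statement's English description precedes it below -/
import Mathlib

section
/- Let P be a coherent normal logic program and L a set of constraints such that SM(P ∪ L) = SM(P). If the constraint ⊥ ← naf a belongs to L for some atom a, then a is a cautious consequence of P, i.e., a ∈ CC(P). (This establishes soundness of the underestimates produced from learned constraints by ComputeStableModel*.) -/
/-- A rule of a normal logic program: head atom, positive body, negative body. -/
structure Rule (A : Type) where
  head : A
  pos : Finset A
  neg : Finset A

/-- An interpretation `I` is a model of a rule `r`: the head is true whenever the
positive body is contained in `I` and the negative body is disjoint from `I`. -/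
def modelsRule {A : Type} (I : Set A) (r : Rule A) : Prop :=
  ((↑r.pos : Set A) ⊆ I ∧ ∀ a ∈ r.neg, a ∉ I) → r.head ∈ I

/-- `I` is a model of the program `P`. -/
def modelsProg {A : Type} (I : Set A) (P : Set (Rule A)) : Prop :=
  ∀ r ∈ P, modelsRule I r

/-- The Gelfond–Lifschitz reduct `P^I`: delete rules whose negative body meets `I`,
and drop the negative body of the remaining rules. -/
def reduct {A : Type} (P : Set (Rule A)) (I : Set A) : Set (Rule A) :=
  {r' | ∃ r ∈ P, (∀ a ∈ r.neg, a ∉ I) ∧ r' = Rule.mk r.head r.pos ∅}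

/-- `M` is a stable model of `P` (with falsum atom `bot`): `M` is an interpretation
(`bot ∉ M`), `M` models the reduct `P^M`, and no proper subset of `M` does. -/
def SM {A : Type} (bot : A) (P : Set (Rule A)) : Set (Set A) :=
  {M | bot ∉ M ∧ modelsProg M (reduct P M) ∧ ∀ J, J ⊂ M → ¬ modelsProg J (reduct P M)}

/-- Cautious consequences: atoms belonging to every stable model of `P`. -/
def CC {A : Type} (bot : A) (P : Set (Rule A)) : Set A :=
  {a | ∀ M ∈ SM bot P, a ∈ M}

theorem modelsRule_of_modelsProg_reduct {A : Type} {P : Set (Rule A)} {M : Set A}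
    (hM : modelsProg M (reduct P M)) {r : Rule A} (hr : r ∈ P) : modelsRule M r := by
  rintro ⟨hpos, hneg⟩
  exact hM ⟨r.head, r.pos, ∅⟩ ⟨r, hr, hneg, rfl⟩ ⟨hpos, by simp⟩

theorem modelsProg_of_mem_SM {A : Type} {bot : A} {P : Set (Rule A)} {M : Set A}
    (hM : M ∈ SM bot P) : modelsProg M P :=
  fun _ hr => modelsRule_of_modelsProg_reduct hM.2.1 hr

theorem mem_of_modelsRule_naf_constraint {A : Type} {bot a : A} {M : Set A}
    (hbot : bot ∉ M) (hM : modelsRule M (Rule.mk bot ∅ {a})) : a ∈ M := by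
  by_contra ha
  exact hbot (hM ⟨by simp, by simpa using ha⟩)

theorem mem_of_mem_SM_of_naf_constraint_mem {A : Type} {bot a : A} {P : Set (Rule A)}
    {M : Set A} (ha : Rule.mk bot ∅ {a} ∈ P) (hM : M ∈ SM bot P) : a ∈ M :=
  mem_of_modelsRule_naf_constraint hM.1 (modelsProg_of_mem_SM hM _ ha)

theorem learned_naf_constraint_sound_general {A : Type} (bot : A)
    (P : Set (Rule A))
    (L : Set (Rule A))
    (heq : SM bot (P ∪ L) = SM bot P)
    (a : A) (ha : Rule.mk bot ∅ {a} ∈ L) :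
    a ∈ CC bot P := by
  intro M hM
  exact mem_of_mem_SM_of_naf_constraint_mem (Or.inr ha) (heq ▸ hM)

/-- Soundness of underestimates from learned constraints: if `⊥ ← naf a` is among
constraints `L` implicit in a coherent program `P` (i.e. `SM (P ∪ L) = SM P`), then
`a` is a cautious consequence of `P`. -/
theorem learned_naf_constraint_sound {A : Type} [Countable A] (bot : A)
    (P : Set (Rule A)) (hP : P.Finite) (hcoh : (SM bot P).Nonempty)
    (L : Set (Rule A)) (hL : ∀ r ∈ L, r.head = bot)
    (heq : SM bot (P ∪ L) = SM bot P)
    (a : A) (ha : Rule.mk bot ∅ {a} ∈ L) :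
    a ∈ CC bot P :=
  learned_naf_constraint_sound_general bot P L heq a ha
end

section
/- The stable models of a normal logic program form an antichain with respect to set inclusion: if M, N ∈ SM(P) and M ⊆ N, then M = N. -/
theorem reduct_anti {A : Type} (P : Set (Rule A)) {I J : Set A} (hIJ : I ⊆ J) :
    reduct P J ⊆ reduct P I := by
  rintro _ ⟨r, hrP, hneg, rfl⟩
  exact ⟨r, hrP, fun a ha haI => hneg a ha (hIJ haI), rfl⟩

theorem modelsProg.mono {A : Type} {I : Set A} {P Q : Set (Rule A)} (hQP : Q ⊆ P)
    (hP : modelsProg I P) : modelsProg I Q :=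
  fun r hr => hP r (hQP hr)

theorem stable_models_antichain_general {A : Type} (bot : A)
    (P : Set (Rule A))
    (M N : Set A) (hM : M ∈ SM bot P) (hN : N ∈ SM bot P) (hMN : M ⊆ N) :
    M = N := by
  by_contra hne
  exact hN.2.2 M (hMN.ssubset_of_ne hne) (hM.2.1.mono (reduct_anti P hMN))

/-- Stable models form an antichain with respect to set inclusion. -/
theorem stable_models_antichain {A : Type} [Countable A] (bot : A)
    (P : Set (Rule A)) (hP : P.Finite)
    (M N : Set A) (hM : M ∈ SM bot P) (hN : N ∈ SM bot P) (hMN : M ⊆ N) :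
    M = N :=
  stable_models_antichain_general bot P M N hM hN hMN
end

section
/- Let P be a coherent normal logic program and a an atom with a ≠ ⊥. Then a is a cautious consequence of P (a ∈ CC(P)) if and only if the program P ∪ {⊥ ← a} is incoherent, i.e., SM(P ∪ {⊥ ← a}) = ∅. (This is the correctness of a single coherence test of the iterative coherence testing procedure.) -/
/-! A constraint never derives an atom, so it cannot spoil the minimality of a model of the
reduct: the stable models of `P ∪ {⊥ ← a}` are exactly the stable models of `P` avoiding `a`. -/

section

variable {A : Type} {bot : A} {P Q : Set (Rule A)} {I J M : Set A}

theorem reduct_union (P Q : Set (Rule A)) (I : Set A) :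
    reduct (P ∪ Q) I = reduct P I ∪ reduct Q I := by
  ext r'
  simp only [reduct, Set.mem_union, Set.mem_ofPred_eq]
  constructor
  · rintro ⟨r, hr | hr, hneg, rfl⟩
    exacts [Or.inl ⟨r, hr, hneg, rfl⟩, Or.inr ⟨r, hr, hneg, rfl⟩]
  · rintro (⟨r, hr, hneg, rfl⟩ | ⟨r, hr, hneg, rfl⟩)
    exacts [⟨r, Or.inl hr, hneg, rfl⟩, ⟨r, Or.inr hr, hneg, rfl⟩]

theorem modelsProg_union : modelsProg I (P ∪ Q) ↔ modelsProg I P ∧ modelsProg I Q := by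
  simp only [modelsProg, Set.mem_union, or_imp, forall_and]

theorem modelsProg_singleton {r : Rule A} : modelsProg I {r} ↔ modelsRule I r := by
  simp only [modelsProg, Set.mem_singleton_iff, forall_eq]

/-- Rules dropped from `P^I` have a negative body meeting `I`, so `I` satisfies them vacuously. -/
theorem modelsProg_reduct_self_iff : modelsProg I (reduct P I) ↔ modelsProg I P := by
  constructor
  · intro h r hr hbody
    exact h (Rule.mk r.head r.pos ∅) ⟨r, hr, hbody.2, rfl⟩ ⟨hbody.1, by simp⟩
  · rintro h _ ⟨r, hr, hneg, rfl⟩ ⟨hpos, -⟩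
    exact h r hr ⟨hpos, hneg⟩

theorem modelsProg_reduct_of_subset_of_heads_eq (hQ : ∀ r ∈ Q, r.head = bot) (hbot : bot ∉ M)
    (hM : modelsProg M Q) (hJM : J ⊆ M) : modelsProg J (reduct Q M) := by
  rintro _ ⟨r, hr, hneg, rfl⟩ ⟨hpos, -⟩
  exact absurd (hQ r hr ▸ hM r hr ⟨hpos.trans hJM, hneg⟩) hbot

theorem mem_SM_union_iff_of_heads_eq (hQ : ∀ r ∈ Q, r.head = bot) :
    M ∈ SM bot (P ∪ Q) ↔ M ∈ SM bot P ∧ modelsProg M Q := by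
  simp only [SM, Set.mem_ofPred_eq, reduct_union, modelsProg_union, modelsProg_reduct_self_iff]
  constructor
  · rintro ⟨hbot, ⟨hP, hQM⟩, hmin⟩
    refine ⟨⟨hbot, hP, fun J hJ hJP => hmin J hJ ⟨hJP, ?_⟩⟩, hQM⟩
    exact modelsProg_reduct_of_subset_of_heads_eq hQ hbot hQM hJ.subset
  · rintro ⟨⟨hbot, hP, hmin⟩, hQM⟩
    exact ⟨hbot, ⟨hP, hQM⟩, fun J hJ hJPQ => hmin J hJ hJPQ.1⟩

theorem modelsRule_constraint_iff (hbot : bot ∉ I) (a : A) :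
    modelsRule I (Rule.mk bot {a} ∅) ↔ a ∉ I := by
  simp [modelsRule, hbot]

theorem mem_SM_union_constraint_iff (a : A) :
    M ∈ SM bot (P ∪ {Rule.mk bot {a} ∅}) ↔ M ∈ SM bot P ∧ a ∉ M := by
  rw [mem_SM_union_iff_of_heads_eq (by simp), modelsProg_singleton]
  exact and_congr_right fun hM => modelsRule_constraint_iff hM.1 a

end

theorem cautious_iff_incoherent_with_constraint_general {A : Type} (bot : A)
    (P : Set (Rule A)) (a : A) :
    a ∈ CC bot P ↔ SM bot (P ∪ {Rule.mk bot {a} ∅}) = ∅ := by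
  simp only [CC, Set.mem_ofPred_eq, Set.eq_empty_iff_forall_notMem, mem_SM_union_constraint_iff,
    not_and, not_not]

/-- Correctness of a single coherence test: for a coherent `P` and atom `a ≠ ⊥`,
`a ∈ CC P` iff `P ∪ {⊥ ← a}` is incoherent. -/
theorem cautious_iff_incoherent_with_constraint {A : Type} [Countable A] (bot : A)
    (P : Set (Rule A)) (hP : P.Finite) (hcoh : (SM bot P).Nonempty)
    (a : A) (ha : a ≠ bot) :
    a ∈ CC bot P ↔ SM bot (P ∪ {Rule.mk bot {a} ∅}) = ∅ :=
  cautious_iff_incoherent_with_constraint_general bot P a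
end

section
/- Progress step of overestimate reduction: let P be a normal logic program and O a nonempty finite set of atoms with ⊥ ∉ O. If I ∈ SM(P ∪ {Constraint(O)}), then I ∈ SM(P), O is not a subset of I, and O ∩ I is a strict subset of O; moreover CC(P) ⊆ I, so if CC(P) ∩ Q ⊆ O for a set Q then also CC(P) ∩ Q ⊆ O ∩ I. Hence each iteration of overestimate reduction strictly shrinks the overestimate while keeping it a superset of the sought cautious consequences. -/
/-!
Adding the constraint `⊥ ← O` only adds the rule `⊥ ← O` to every reduct, so a candidate `J ⊆ I`
satisfies the new reduct iff it satisfies the old one and does not contain `O` (as `⊥ ∉ J`).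
A stable model `I` of the extended program therefore models the old reduct, omits part of `O`, and
is still minimal, because every `J ⊂ I` also omits part of `O`. Being a stable model of `P`, it
contains all cautious consequences of `P`.
-/

theorem modelsProg_insert {A : Type} {r : Rule A} {P : Set (Rule A)} {J : Set A} :
    modelsProg J (insert r P) ↔ modelsRule J r ∧ modelsProg J P :=
  Set.forall_mem_insert

theorem CC_subset_of_mem_SM {A : Type} {bot : A} {P : Set (Rule A)} {M : Set A}
    (hM : M ∈ SM bot P) : CC bot P ⊆ M :=
  fun _ ha => ha M hM

section Constraint

variable {A : Type} (bot : A) (O : Finset A)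

theorem modelsRule_constraint_iff_s12 (J : Set A) :
    modelsRule J (Rule.mk bot O ∅) ↔ ((↑O : Set A) ⊆ J → bot ∈ J) := by
  simp [modelsRule]

theorem reduct_union_constraint (P : Set (Rule A)) (I : Set A) :
    reduct (P ∪ {Rule.mk bot O ∅}) I = insert (Rule.mk bot O ∅) (reduct P I) := by
  ext r
  simp only [reduct, Set.mem_union, Set.mem_singleton_iff, Set.mem_ofPred_eq, Set.mem_insert_iff]
  constructor
  · rintro ⟨r₀, hr₀ | rfl, hneg, rfl⟩
    · exact Or.inr ⟨r₀, hr₀, hneg, rfl⟩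
    · exact Or.inl rfl
  · rintro (rfl | ⟨r₀, hr₀, hneg, rfl⟩)
    · exact ⟨_, Or.inr rfl, by simp, rfl⟩
    · exact ⟨r₀, Or.inl hr₀, hneg, rfl⟩

theorem modelsProg_reduct_union_constraint_iff {P : Set (Rule A)} {I J : Set A}
    (hbot : bot ∉ J) :
    modelsProg J (reduct (P ∪ {Rule.mk bot O ∅}) I) ↔
      ¬ (↑O : Set A) ⊆ J ∧ modelsProg J (reduct P I) := by
  rw [reduct_union_constraint, modelsProg_insert, modelsRule_constraint_iff_s12, imp_iff_not hbot]

variable {bot O}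

theorem not_subset_of_mem_SM_union_constraint {P : Set (Rule A)} {I : Set A}
    (hI : I ∈ SM bot (P ∪ {Rule.mk bot O ∅})) : ¬ (↑O : Set A) ⊆ I :=
  ((modelsProg_reduct_union_constraint_iff bot O hI.1).1 hI.2.1).1

theorem mem_SM_of_mem_SM_union_constraint {P : Set (Rule A)} {I : Set A}
    (hI : I ∈ SM bot (P ∪ {Rule.mk bot O ∅})) : I ∈ SM bot P := by
  obtain ⟨hbotI, hmod, hmin⟩ := hI
  rw [modelsProg_reduct_union_constraint_iff bot O hbotI] at hmod
  refine ⟨hbotI, hmod.2, fun J hJ hJmod => hmin J hJ ?_⟩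
  have hbotJ : bot ∉ J := fun h => hbotI (hJ.subset h)
  exact (modelsProg_reduct_union_constraint_iff bot O hbotJ).2
    ⟨fun hOJ => hmod.1 (hOJ.trans hJ.subset), hJmod⟩

end Constraint

theorem overestimate_reduction_progress_general {A : Type} (bot : A)
    (P : Set (Rule A))
    (O : Finset A)
    (I : Set A) (hI : I ∈ SM bot (P ∪ {Rule.mk bot O ∅})) :
    I ∈ SM bot P ∧ ¬ (↑O : Set A) ⊆ I ∧ (↑O ∩ I) ⊂ (↑O : Set A) ∧
    CC bot P ⊆ I ∧
    ∀ Q : Set A, CC bot P ∩ Q ⊆ ↑O → CC bot P ∩ Q ⊆ ↑O ∩ I := by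
  have hSM := mem_SM_of_mem_SM_union_constraint hI
  have hOI := not_subset_of_mem_SM_union_constraint hI
  have hCC := CC_subset_of_mem_SM hSM
  exact ⟨hSM, hOI, Set.inter_ssubset_left_iff.2 hOI, hCC,
    fun Q hQ => Set.subset_inter hQ (Set.inter_subset_left.trans hCC)⟩

/-- Progress step of overestimate reduction: a stable model of `P ∪ {Constraint O}`
is a stable model of `P` not containing all of `O`, so intersecting strictly shrinks
the overestimate while keeping it a superset of the sought cautious consequences. -/
theorem overestimate_reduction_progress {A : Type} [Countable A] (bot : A)
    (P : Set (Rule A)) (hP : P.Finite)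
    (O : Finset A) (hO : O.Nonempty) (hbot : bot ∉ O)
    (I : Set A) (hI : I ∈ SM bot (P ∪ {Rule.mk bot O ∅})) :
    I ∈ SM bot P ∧ ¬ (↑O : Set A) ⊆ I ∧ (↑O ∩ I) ⊂ (↑O : Set A) ∧
    CC bot P ⊆ I ∧
    ∀ Q : Set A, CC bot P ∩ Q ⊆ ↑O → CC bot P ∩ Q ⊆ ↑O ∩ I :=
  overestimate_reduction_progress_general bot P O I hI
end

section
/- Progress step of enumeration of models: let P be a normal logic program and I_1, …, I_k ∈ SM(P) (each finite). If I ∈ SM(P ∪ {Constraint(I_1), …, Constraint(I_k)}), then I ∈ SM(P) and I ≠ I_j for every j ∈ {1, …, k}. Consequently, any sequence of stable models produced by iteratively adding the constraint eliminating the last found stable model consists of pairwise distinct stable models of P, so the enumeration terminates after at most |SM(P)| iterations. -/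
section

variable {A : Type} {bot : A}

lemma reduct_mono {P Q : Set (Rule A)} (hPQ : P ⊆ Q) (I : Set A) : reduct P I ⊆ reduct Q I := by
  rintro r' ⟨r, hr, hneg, rfl⟩
  exact ⟨r, hPQ hr, hneg, rfl⟩

lemma not_pos_subset_of_mem_SM {Q : Set (Rule A)} {I : Set A} (hI : I ∈ SM bot Q)
    {r : Rule A} (hr : r ∈ Q) (hhead : r.head = bot) (hneg : ∀ a ∈ r.neg, a ∉ I) :
    ¬ (↑r.pos : Set A) ⊆ I := fun hpos =>
  hI.1 (hhead ▸ hI.2.1 ⟨r.head, r.pos, ∅⟩ ⟨r, hr, hneg, rfl⟩ ⟨hpos, by simp⟩)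

lemma ne_of_constraint_mem {Q : Set (Rule A)} {I : Set A} (hI : I ∈ SM bot Q) {S : Finset A}
    (hS : Rule.mk bot S ∅ ∈ Q) : I ≠ ↑S := by
  rintro rfl
  exact not_pos_subset_of_mem_SM hI hS rfl (by simp) subset_rfl

/-- Constraints violated by `I` vanish from the minimality test as well: their reduct rules
have bodies not contained in `I`, so they hold in every `J ⊆ I`. -/
lemma mem_SM_of_mem_SM_union {P C : Set (Rule A)} (hC : ∀ r ∈ C, r.head = bot) {I : Set A}
    (hI : I ∈ SM bot (P ∪ C)) : I ∈ SM bot P := by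
  refine ⟨hI.1, fun r hr => hI.2.1 r (reduct_mono Set.subset_union_left I hr), ?_⟩
  intro J hJI hJ
  refine hI.2.2 J hJI ?_
  rintro r' ⟨r, hr | hr, hneg, rfl⟩
  · exact hJ _ ⟨r, hr, hneg, rfl⟩
  · rintro ⟨hpos, -⟩
    exact (not_pos_subset_of_mem_SM hI (Or.inr hr) (hC r hr) hneg
      (hpos.trans hJI.subset)).elim

/-- Every atom of a stable model is supported: dropping an atom that heads no rule of `P`
would leave a smaller model of the reduct. -/
lemma subset_image_head_of_mem_SM {P : Set (Rule A)} {M : Set A} (hM : M ∈ SM bot P) :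
    M ⊆ Rule.head '' P := by
  obtain ⟨-, hmod, hmin⟩ := hM
  intro a ha
  by_contra hah
  refine hmin (M \ {a}) (Set.sdiff_singleton_ssubset.2 ha) ?_
  rintro r' ⟨r, hr, hneg, rfl⟩ ⟨hpos, -⟩
  refine ⟨hmod _ ⟨r, hr, hneg, rfl⟩ ⟨hpos.trans Set.sdiff_subset, by simp⟩, ?_⟩
  rintro rfl
  exact hah ⟨r, hr, rfl⟩

lemma finite_SM {P : Set (Rule A)} (hP : P.Finite) : (SM bot P).Finite :=
  (hP.image Rule.head).finite_subsets.subset fun _ hM => subset_image_head_of_mem_SM hM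

lemma Function.injective_of_lt_imp_ne {α β : Type*} [LinearOrder α] {f : α → β}
    (h : ∀ i j, i < j → f i ≠ f j) : Function.Injective f := fun i j hij =>
  by_contra fun hne => (lt_or_gt_of_ne hne).elim (fun hlt => h i j hlt hij)
    (fun hgt => h j i hgt hij.symm)

end

theorem enumeration_of_models_progress_general {A : Type} (bot : A)
    (P : Set (Rule A)) (hP : P.Finite)
    (k : ℕ) (Is : Fin k → Finset A)
    (I : Set A) (hI : I ∈ SM bot (P ∪ Set.range fun j => Rule.mk bot (Is j) ∅)) :
    (I ∈ SM bot P ∧ ∀ j, I ≠ ↑(Is j)) ∧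
    ∀ (m : ℕ) (Js : Fin m → Finset A),
      (∀ j : Fin m, (↑(Js j) : Set A) ∈
        SM bot (P ∪ {r | ∃ i : Fin m, i < j ∧ r = Rule.mk bot (Js i) ∅})) →
      (Function.Injective fun j : Fin m => (↑(Js j) : Set A)) ∧
      m ≤ Nat.card (SM bot P) := by
  refine ⟨⟨mem_SM_of_mem_SM_union (by rintro _ ⟨j, rfl⟩; rfl) hI,
    fun j => ne_of_constraint_mem hI (Or.inr ⟨j, rfl⟩)⟩, fun m Js hJs => ?_⟩
  have hinj : Function.Injective fun j : Fin m => (↑(Js j) : Set A) :=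
    Function.injective_of_lt_imp_ne fun i j hij =>
      (ne_of_constraint_mem (hJs j) (Or.inr ⟨i, hij, rfl⟩)).symm
  have hJsP : ∀ j, (↑(Js j) : Set A) ∈ SM bot P := fun j =>
    mem_SM_of_mem_SM_union (by rintro _ ⟨i, -, rfl⟩; rfl) (hJs j)
  have : Finite (SM bot P) := (finite_SM hP).to_subtype
  refine ⟨hinj, ?_⟩
  simpa using Nat.card_le_card_of_injective (fun j => (⟨_, hJsP j⟩ : SM bot P))
    fun i j h => hinj (congrArg Subtype.val h)

/-- Progress step of enumeration of models: a stable model of `P` together with the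
constraints eliminating previously found stable models `I_1, …, I_k` is a stable model
of `P` different from all of them; consequently iteratively produced stable models are
pairwise distinct and enumeration stops after at most `|SM P|` iterations. -/
theorem enumeration_of_models_progress {A : Type} [Countable A] (bot : A)
    (P : Set (Rule A)) (hP : P.Finite)
    (k : ℕ) (Is : Fin k → Finset A) (hIs : ∀ j, (↑(Is j) : Set A) ∈ SM bot P)
    (I : Set A) (hI : I ∈ SM bot (P ∪ Set.range fun j => Rule.mk bot (Is j) ∅)) :
    (I ∈ SM bot P ∧ ∀ j, I ≠ ↑(Is j)) ∧
    ∀ (m : ℕ) (Js : Fin m → Finset A),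
      (∀ j : Fin m, (↑(Js j) : Set A) ∈
        SM bot (P ∪ {r | ∃ i : Fin m, i < j ∧ r = Rule.mk bot (Js i) ∅})) →
      (Function.Injective fun j : Fin m => (↑(Js j) : Set A)) ∧
      m ≤ Nat.card (SM bot P) :=
  enumeration_of_models_progress_general bot P hP k Is I hI
end

section
/- Correctness of the SAT encoding: the map σ ↦ I_σ is a bijection between the assignments σ satisfying the CNF formula φ and the stable models of the program P_φ; that is, for every assignment σ satisfying φ, I_σ ∈ SM(P_φ), and every stable model of P_φ equals I_σ for exactly one satisfying assignment σ. -/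
/-- An assignment `σ` satisfies a CNF formula `φ` (clauses are finite sets of
literals; a literal is a pair (variable index, polarity)). -/
def satisfies {n : ℕ} (σ : Fin n → Bool) (φ : Finset (Finset (Fin n × Bool))) : Prop :=
  ∀ c ∈ φ, ∃ l ∈ c, σ l.1 = l.2

/-- The ASP encoding `P_φ` of a CNF formula `φ`, using atoms `t i`, `f i`. -/
def Pphi {A : Type} [DecidableEq A] (bot : A) {n : ℕ} (t f : Fin n → A)
    (φ : Finset (Finset (Fin n × Bool))) : Set (Rule A) :=
  (Set.range fun i => Rule.mk (t i) ∅ {f i}) ∪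
  (Set.range fun i => Rule.mk (f i) ∅ {t i}) ∪
  {r | ∃ c ∈ φ, r = Rule.mk bot
      (((c.filter fun l => l.2 = true).image fun l => f l.1) ∪
       ((c.filter fun l => l.2 = false).image fun l => t l.1)) ∅}

/-- The interpretation `I_σ` corresponding to an assignment `σ`. -/
def Isig {A : Type} {n : ℕ} (t f : Fin n → A) (σ : Fin n → Bool) : Set A :=
  Set.range fun i => if σ i then t i else f i

/-!
In the reduct of `P_φ` with respect to `I`, the choice rules become the facts `t i` (if `f i ∉ I`)
and `f i` (if `t i ∉ I`), while the constraints survive unchanged. For `I = I_σ` these facts are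
exactly the atoms of `I_σ`, which gives minimality, and the constraints hold iff `σ` satisfies `φ`.
Conversely, a stable model `M` contains `I_σ` for `σ i := (t i ∈ M)`, and `I_σ` already models the
reduct `P_φ^M`, so minimality of `M` forces `M = I_σ`.
-/

theorem SM.eq_of_subset_of_modelsProg {A : Type} {bot : A} {P : Set (Rule A)} {M J : Set A}
    (hM : M ∈ SM bot P) (hJM : J ⊆ M) (hJ : modelsProg J (reduct P M)) : J = M :=
  by_contra fun hne => hM.2.2 J (hJM.ssubset_of_ne hne) hJ

theorem modelsProg_reduct_iff {A : Type} {P : Set (Rule A)} {I J : Set A} :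
    modelsProg J (reduct P I) ↔
      ∀ r ∈ P, (∀ a ∈ r.neg, a ∉ I) → (↑r.pos : Set A) ⊆ J → r.head ∈ J := by
  constructor
  · intro hJ r hr hneg hpos
    exact hJ (Rule.mk r.head r.pos ∅) ⟨r, hr, hneg, rfl⟩ ⟨hpos, by simp⟩
  · rintro hJ _ ⟨r, hr, hneg, rfl⟩ ⟨hpos, -⟩
    exact hJ r hr hneg hpos

section Encoding

variable {A : Type} {bot : A} {n : ℕ} {t f : Fin n → A}
  {φ : Finset (Finset (Fin n × Bool))}

/-- The positive body of the constraint that `Pphi` attaches to the clause `c`: the atoms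
that make each literal of `c` false. -/
def clauseBody [DecidableEq A] (t f : Fin n → A) (c : Finset (Fin n × Bool)) : Finset A :=
  ((c.filter fun l => l.2 = true).image fun l => f l.1) ∪
    ((c.filter fun l => l.2 = false).image fun l => t l.1)

theorem modelsProg_reduct_Pphi_iff [DecidableEq A] {I J : Set A} :
    modelsProg J (reduct (Pphi bot t f φ) I) ↔
      (∀ i, f i ∉ I → t i ∈ J) ∧ (∀ i, t i ∉ I → f i ∈ J) ∧
        ∀ c ∈ φ, (↑(clauseBody t f c) : Set A) ⊆ J → bot ∈ J := by
  simp only [modelsProg_reduct_iff, Pphi, Set.mem_union, Set.mem_range, Set.mem_ofPred_eq, or_imp,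
    forall_and, forall_exists_index, forall_apply_eq_imp_iff, Finset.mem_singleton, forall_eq,
    Finset.coe_empty, Set.empty_subset, forall_const, and_assoc]
  refine and_congr_right' (and_congr_right' ⟨fun h c hc => h _ c ⟨hc, rfl⟩ (by simp),
    fun h _ c ⟨hc, hr⟩ _ => hr ▸ h c hc⟩)

theorem mem_Isig_t (ht : Function.Injective t) (htf : ∀ i j, t i ≠ f j)
    (σ : Fin n → Bool) (i : Fin n) : t i ∈ Isig t f σ ↔ σ i = true := by
  constructor
  · rintro ⟨j, hj⟩
    cases hσ : σ j <;> simp only [hσ] at hj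
    · exact absurd hj.symm (htf i j)
    · rwa [← ht hj]
  · intro h
    exact ⟨i, if_pos h⟩

theorem mem_Isig_f (hf : Function.Injective f) (htf : ∀ i j, t i ≠ f j)
    (σ : Fin n → Bool) (i : Fin n) : f i ∈ Isig t f σ ↔ σ i = false := by
  constructor
  · rintro ⟨j, hj⟩
    cases hσ : σ j <;> simp only [hσ] at hj
    · rwa [← hf hj]
    · exact absurd hj (htf j i)
  · intro h
    exact ⟨i, by simp [h]⟩

theorem bot_notMem_Isig (htbot : ∀ i, t i ≠ bot) (hfbot : ∀ i, f i ≠ bot)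
    (σ : Fin n → Bool) : bot ∉ Isig t f σ := by
  rintro ⟨i, hi⟩
  cases hσ : σ i <;> simp only [hσ] at hi
  · exact hfbot i hi
  · exact htbot i hi

theorem Isig_injective (ht : Function.Injective t) (htf : ∀ i j, t i ≠ f j) :
    Function.Injective (Isig t f) := fun σ σ' h => funext fun i =>
  Bool.eq_iff_iff.mpr <| by rw [← mem_Isig_t ht htf, h, mem_Isig_t ht htf]

theorem clauseBody_subset_Isig_iff [DecidableEq A] (ht : Function.Injective t)
    (hf : Function.Injective f) (htf : ∀ i j, t i ≠ f j) (σ : Fin n → Bool)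
    (c : Finset (Fin n × Bool)) :
    (↑(clauseBody t f c) : Set A) ⊆ Isig t f σ ↔ ∀ l ∈ c, σ l.1 ≠ l.2 := by
  simp only [clauseBody, Finset.coe_union, Finset.coe_image, Finset.coe_filter, Set.subset_def,
    Set.mem_union, Set.mem_image, Set.mem_ofPred_eq, Prod.exists, exists_and_right, ↓existsAndEq,
    and_true, or_imp, forall_exists_index, and_imp, forall_and, forall_apply_eq_imp_iff₂,
    mem_Isig_f hf htf, mem_Isig_t ht htf, ne_eq, Prod.forall, Bool.forall_bool, Bool.not_eq_false,
    Bool.not_eq_true]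
  exact and_comm

theorem satisfies_iff_not_clauseBody_subset [DecidableEq A] (ht : Function.Injective t)
    (hf : Function.Injective f) (htf : ∀ i j, t i ≠ f j) (σ : Fin n → Bool) :
    satisfies σ φ ↔ ∀ c ∈ φ, ¬ (↑(clauseBody t f c) : Set A) ⊆ Isig t f σ := by
  simp only [satisfies, clauseBody_subset_Isig_iff ht hf htf, ne_eq, not_forall, not_not,
    exists_prop]

theorem Isig_subset_of_modelsProg_reduct_Pphi [DecidableEq A] (ht : Function.Injective t)
    (hf : Function.Injective f) (htf : ∀ i j, t i ≠ f j) {σ : Fin n → Bool} {J : Set A}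
    (hJ : modelsProg J (reduct (Pphi bot t f φ) (Isig t f σ))) : Isig t f σ ⊆ J := by
  obtain ⟨hT, hF, -⟩ := modelsProg_reduct_Pphi_iff.1 hJ
  rintro _ ⟨i, rfl⟩
  cases hσ : σ i
  · simpa [hσ] using hF i (by simp [mem_Isig_t ht htf, hσ])
  · simpa [hσ] using hT i (by simp [mem_Isig_f hf htf, hσ])

theorem Isig_mem_SM_Pphi [DecidableEq A] (ht : Function.Injective t) (hf : Function.Injective f)
    (htf : ∀ i j, t i ≠ f j) (htbot : ∀ i, t i ≠ bot) (hfbot : ∀ i, f i ≠ bot)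
    {σ : Fin n → Bool} (hσ : satisfies σ φ) : Isig t f σ ∈ SM bot (Pphi bot t f φ) := by
  refine ⟨bot_notMem_Isig htbot hfbot σ, modelsProg_reduct_Pphi_iff.2 ⟨fun i hi => ?_,
    fun i hi => ?_, fun c hc hbody => ?_⟩, fun J hJ hJmodel => ?_⟩
  · simpa [mem_Isig_t ht htf, mem_Isig_f hf htf] using hi
  · simpa [mem_Isig_t ht htf, mem_Isig_f hf htf] using hi
  · exact absurd hbody ((satisfies_iff_not_clauseBody_subset ht hf htf σ).1 hσ c hc)
  · exact hJ.2 (Isig_subset_of_modelsProg_reduct_Pphi ht hf htf hJmodel)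

theorem exists_satisfies_eq_Isig_of_mem_SM_Pphi [DecidableEq A] (ht : Function.Injective t)
    (hf : Function.Injective f) (htf : ∀ i j, t i ≠ f j) {M : Set A}
    (hM : M ∈ SM bot (Pphi bot t f φ)) : ∃ σ, satisfies σ φ ∧ M = Isig t f σ := by
  classical
  obtain ⟨hT, hF, hC⟩ := modelsProg_reduct_Pphi_iff.1 hM.2.1
  set σ : Fin n → Bool := fun i => decide (t i ∈ M)
  have hsub : Isig t f σ ⊆ M := by
    rintro _ ⟨i, rfl⟩
    by_cases h : t i ∈ M
    · simp [σ, h]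
    · simpa [σ, h] using hF i h
  have hsat : satisfies σ φ := (satisfies_iff_not_clauseBody_subset ht hf htf σ).2
    fun c hc hbody => hM.1 (hC c hc (hbody.trans hsub))
  refine ⟨σ, hsat, (SM.eq_of_subset_of_modelsProg hM hsub
    (modelsProg_reduct_Pphi_iff.2 ⟨fun i hi => ?_, fun i hi => ?_, fun c hc hbody => ?_⟩)).symm⟩
  · simpa [mem_Isig_t ht htf, σ] using hT i hi
  · simpa [mem_Isig_f hf htf, σ] using hi
  · exact absurd hbody ((satisfies_iff_not_clauseBody_subset ht hf htf σ).1 hsat c hc)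

end Encoding

theorem sat_encoding_correct_general {A : Type} [DecidableEq A] (bot : A)
    {n : ℕ} (t f : Fin n → A)
    (ht : Function.Injective t) (hf : Function.Injective f)
    (htf : ∀ i j, t i ≠ f j)
    (htbot : ∀ i, t i ≠ bot) (hfbot : ∀ i, f i ≠ bot)
    (φ : Finset (Finset (Fin n × Bool))) :
    (∀ σ : Fin n → Bool, satisfies σ φ → Isig t f σ ∈ SM bot (Pphi bot t f φ)) ∧
    (∀ M ∈ SM bot (Pphi bot t f φ),
      ∃! σ : Fin n → Bool, satisfies σ φ ∧ M = Isig t f σ) := by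
  refine ⟨fun σ hσ => Isig_mem_SM_Pphi ht hf htf htbot hfbot hσ, fun M hM => ?_⟩
  obtain ⟨σ, hσ, hMσ⟩ := exists_satisfies_eq_Isig_of_mem_SM_Pphi ht hf htf hM
  exact ⟨σ, ⟨hσ, hMσ⟩, fun σ' ⟨_, hMσ'⟩ => Isig_injective ht htf (hMσ'.symm.trans hMσ)⟩

/-- Correctness of the SAT encoding: `σ ↦ I_σ` is a bijection between satisfying
assignments of `φ` and stable models of `P_φ`. -/
theorem sat_encoding_correct {A : Type} [Countable A] [DecidableEq A] (bot : A)
    {n : ℕ} (t f : Fin n → A)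
    (ht : Function.Injective t) (hf : Function.Injective f)
    (htf : ∀ i j, t i ≠ f j)
    (htbot : ∀ i, t i ≠ bot) (hfbot : ∀ i, f i ≠ bot)
    (φ : Finset (Finset (Fin n × Bool))) :
    (∀ σ : Fin n → Bool, satisfies σ φ → Isig t f σ ∈ SM bot (Pphi bot t f φ)) ∧
    (∀ M ∈ SM bot (Pphi bot t f φ),
      ∃! σ : Fin n → Bool, satisfies σ φ ∧ M = Isig t f σ) :=
  sat_encoding_correct_general bot t f ht hf htf htbot hfbot φ
end
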